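/- arXiv:1402.0636 — 4 statements merged into one kernel-verified Lean document; each statement's English description precedes it below -/
import Mathlib

section
/- Let N ≥ 0 be an integer. Then (2x·e^{−2x}/π)·G_N(x) → 1 as x → ∞. -/
open Real MeasureTheory Filter Set Topology

/-- Modified Bessel function of the first kind of integer order `N`. -/
noncomputable def besselI (N : ℕ) (x : ℝ) : ℝ :=
  ∑' n : ℕ, (x / 2) ^ (2 * n + N) / ((Nat.factorial n : ℝ) * (Nat.factorial (n + N) : ℝ))

/-- Modified Bessel function of the second kind of integer order `N`. -/
noncomputable def besselK (N : ℕ) (x : ℝ) : ℝ :=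
  ∫ s in Ioi (0 : ℝ), Real.exp (-x * Real.cosh s) * Real.cosh (N * s)

/-- `G_N(x) = K_N(x)^2 + π^2 I_N(x)^2`. -/
noncomputable def G (N : ℕ) (x : ℝ) : ℝ :=
  besselK N x ^ 2 + Real.pi ^ 2 * besselI N x ^ 2

/-!
Writing `exp (x cos θ) = exp (x e^{iθ} / 2) * exp (x e^{-iθ} / 2)` as a double series and
integrating termwise against `cos (N θ)` gives Bessel's integral
`π I_N(x) = ∫₀^π e^{x cos θ} cos (N θ) dθ`. After the substitution `θ = t / √x` this is Laplace's
method: `x (1 - cos (t / √x)) → t² / 2`, dominated through `1 - cos u ≥ 2 u² / π²` on `[0, π]`, so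
`√(2πx) e^{-x} I_N(x) → 1`. On the other hand `K_N(x) = O(e^{-x})`, so `x e^{-2x} K_N(x)²` is
negligible.
-/

lemma integral_cos_int_mul (m : ℤ) :
    ∫ θ in (0 : ℝ)..π, cos (m * θ) = if m = 0 then π else 0 := by
  split_ifs with hm
  · simp [hm]
  · have hm' : (m : ℝ) ≠ 0 := Int.cast_ne_zero.mpr hm
    simp [intervalIntegral.integral_comp_mul_left (fun θ => cos θ) hm', sin_int_mul_pi]

lemma integral_cos_int_mul_mul_cos_int_mul (m n : ℤ) :
    ∫ θ in (0 : ℝ)..π, cos (m * θ) * cos (n * θ) =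
      π / 2 * ((if m = n then 1 else 0) + (if m = -n then 1 else 0)) := by
  have hprod (θ : ℝ) : cos (m * θ) * cos (n * θ) =
      (cos (((m - n : ℤ) : ℝ) * θ) + cos (((m + n : ℤ) : ℝ) * θ)) / 2 := by
    push_cast
    rw [sub_mul, add_mul, ← two_mul_cos_mul_cos]; ring
  have hint (k : ℤ) : IntervalIntegrable (fun θ : ℝ => cos (k * θ)) volume 0 π :=
    (continuous_cos.comp (continuous_const_mul _)).intervalIntegrable _ _
  simp_rw [hprod]
  rw [intervalIntegral.integral_div, intervalIntegral.integral_add (hint _) (hint _),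
    integral_cos_int_mul, integral_cos_int_mul]
  simp only [sub_eq_zero, add_eq_zero_iff_eq_neg]
  split_ifs <;> ring

/-- The coefficient of `e^{i(a-b)θ}` in `exp (x e^{iθ} / 2) * exp (x e^{-iθ} / 2)`. -/
noncomputable def expCosCoeff (x : ℝ) (p : ℕ × ℕ) : ℝ :=
  (x / 2) ^ p.1 / p.1.factorial * ((x / 2) ^ p.2 / p.2.factorial)

lemma summable_abs_expCosCoeff (x : ℝ) : Summable fun p => |expCosCoeff x p| := by
  have h := Real.summable_pow_div_factorial |x / 2|
  simpa [expCosCoeff, abs_mul, abs_div, abs_pow] using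
    h.mul_of_nonneg h (fun n => by positivity) (fun n => by positivity)

lemma Complex.hasSum_exp (z : ℂ) : HasSum (fun n => z ^ n / n.factorial) (Complex.exp z) := by
  rw [Complex.exp_eq_exp_ℂ]; exact NormedSpace.expSeries_div_hasSum_exp z

lemma hasSum_expCosCoeff_mul_cos (x θ : ℝ) :
    HasSum (fun p : ℕ × ℕ => expCosCoeff x p * cos (((p.1 - p.2 : ℤ) : ℝ) * θ))
      (exp (x * cos θ)) := by
  set z : ℂ := x / 2 * Complex.exp (θ * Complex.I)
  set w : ℂ := x / 2 * Complex.exp (-(θ * Complex.I))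
  have hnorm (u : ℂ) : Summable fun n => ‖u ^ n / n.factorial‖ := by
    simpa [norm_pow] using Real.summable_pow_div_factorial ‖u‖
  have hsumm := summable_mul_of_summable_norm (hnorm z) (hnorm w)
  have hprod := (Complex.hasSum_exp z).mul (Complex.hasSum_exp w) hsumm
  have hzw : Complex.exp z * Complex.exp w = (exp (x * cos θ) : ℂ) := by
    rw [← Complex.exp_add, Complex.ofReal_exp]
    push_cast [z, w]
    rw [Complex.cos]
    ring_nf
  rw [hzw] at hprod
  convert Complex.hasSum_re hprod using 1
  · ext ⟨a, b⟩
    have hterm : z ^ a / a.factorial * (w ^ b / b.factorial) =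
        (expCosCoeff x (a, b) : ℂ) * Complex.exp ((((a - b : ℤ) : ℝ) * θ : ℝ) * Complex.I) := by
      simp only [z, w, expCosCoeff, mul_pow, ← Complex.exp_nat_mul]
      push_cast
      rw [show ((a : ℂ) - b) * θ * Complex.I = a * (θ * Complex.I) + b * (-(θ * Complex.I)) by ring,
        Complex.exp_add]
      ring
    simp only [hterm, Complex.re_ofReal_mul, Complex.exp_ofReal_mul_I_re]
  · exact (Complex.ofReal_re _).symm

lemma expCosCoeff_swap (x : ℝ) (p : ℕ × ℕ) : expCosCoeff x p.swap = expCosCoeff x p :=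
  mul_comm _ _

lemma hasSum_besselI (N : ℕ) (x : ℝ) :
    HasSum (fun n => expCosCoeff x (n + N, n)) (besselI N x) := by
  have hg : Function.Injective fun n : ℕ => (n + N, n) := fun a b h => congrArg Prod.snd h
  have hs := (summable_abs_expCosCoeff x).of_abs.comp_injective hg
  have hterm (n : ℕ) : expCosCoeff x (n + N, n) =
      (x / 2) ^ (2 * n + N) / (n.factorial * (n + N).factorial) := by
    rw [expCosCoeff, show 2 * n + N = (n + N) + n by ring, pow_add]
    ring
  simp only [Function.comp_def, hterm] at hs ⊢
  exact hs.hasSum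

lemma hasSum_ite_sub_eq_besselI (N : ℕ) (x : ℝ) :
    HasSum (fun p : ℕ × ℕ => if (p.1 - p.2 : ℤ) = N then expCosCoeff x p else 0)
      (besselI N x) := by
  have hg : Function.Injective fun n : ℕ => (n + N, n) := fun a b h => congrArg Prod.snd h
  refine (hg.hasSum_iff ?_).mp ?_
  · rintro ⟨a, b⟩ hp
    refine if_neg fun h => hp ⟨b, ?_⟩
    simp only [Prod.mk.injEq, and_true]
    omega
  · simpa [Function.comp_def] using hasSum_besselI N x

lemma hasSum_ite_sub_eq_neg_besselI (N : ℕ) (x : ℝ) :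
    HasSum (fun p : ℕ × ℕ => if (p.1 - p.2 : ℤ) = -N then expCosCoeff x p else 0)
      (besselI N x) := by
  rw [← (Equiv.prodComm ℕ ℕ).hasSum_iff]
  convert hasSum_ite_sub_eq_besselI N x using 2 with p
  simp only [Function.comp_apply, Equiv.prodComm_apply, Prod.fst_swap, Prod.snd_swap,
    expCosCoeff_swap]
  congr 1
  apply propext
  omega

theorem integral_exp_mul_cos_mul_cos_eq_pi_mul_besselI (N : ℕ) (x : ℝ) :
    ∫ θ in (0 : ℝ)..π, exp (x * cos θ) * cos (N * θ) = π * besselI N x := by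
  have hcont (p : ℕ × ℕ) : Continuous fun θ : ℝ =>
      expCosCoeff x p * cos (((p.1 - p.2 : ℤ) : ℝ) * θ) * cos (N * θ) := by fun_prop
  have hsum := intervalIntegral.hasSum_integral_of_dominated_convergence
    (μ := volume) (a := 0) (b := π) (f := fun θ => exp (x * cos θ) * cos (N * θ))
    (bound := fun p _ => |expCosCoeff x p|)
    (fun p => (hcont p).aestronglyMeasurable)
    (fun p => .of_forall fun θ _ => by
      simpa [abs_mul] using mul_le_mul (mul_le_of_le_one_right (abs_nonneg _) (abs_cos_le_one _))
        (abs_cos_le_one (N * θ)) (abs_nonneg _) (abs_nonneg _))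
    (.of_forall fun _ _ => summable_abs_expCosCoeff x) intervalIntegrable_const
    (.of_forall fun θ _ => (hasSum_expCosCoeff_mul_cos x θ).mul_right (cos (N * θ)))
  refine hsum.unique ?_
  have hN : (N : ℝ) = ((N : ℤ) : ℝ) := rfl
  simp_rw [mul_assoc, intervalIntegral.integral_const_mul, hN,
    integral_cos_int_mul_mul_cos_int_mul]
  have hterm (p : ℕ × ℕ) : expCosCoeff x p * (π / 2 * ((if (p.1 - p.2 : ℤ) = N then 1 else 0) +
      (if (p.1 - p.2 : ℤ) = -N then 1 else 0))) = π / 2 *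
      ((if (p.1 - p.2 : ℤ) = N then expCosCoeff x p else 0) +
        (if (p.1 - p.2 : ℤ) = -N then expCosCoeff x p else 0)) := by
    split_ifs <;> ring
  simp only [hterm]
  rw [show π * besselI N x = π / 2 * (besselI N x + besselI N x) by ring]
  exact ((hasSum_ite_sub_eq_besselI N x).add (hasSum_ite_sub_eq_neg_besselI N x)).mul_left _

lemma tendsto_mul_one_sub_cos_div_sqrt (t : ℝ) :
    Tendsto (fun x => x * (1 - cos (t / √x))) atTop (𝓝 (t ^ 2 / 2)) := by
  have hsmall : Tendsto (fun x => 5 / 96 * t ^ 4 / x) atTop (𝓝 0) :=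
    tendsto_const_nhds.div_atTop tendsto_id
  refine tendsto_sub_nhds_zero_iff.mp (squeeze_zero_norm' ?_ hsmall)
  filter_upwards [eventually_gt_atTop 0, eventually_ge_atTop (t ^ 2)] with x hx hxt
  have hu : (t / √x) ^ 2 = t ^ 2 / x := by rw [div_pow, sq_sqrt hx.le]
  have hu1 : |t / √x| ≤ 1 := by
    rw [← sq_le_one_iff_abs_le_one, hu, div_le_one hx]
    exact hxt
  have hu4 : |t / √x| ^ 4 = (t ^ 2 / x) ^ 2 := by
    rw [show 4 = 2 * 2 by rfl, pow_mul, sq_abs, hu]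
  calc ‖x * (1 - cos (t / √x)) - t ^ 2 / 2‖
        = |x * (cos (t / √x) - (1 - (t / √x) ^ 2 / 2))| := by
        rw [Real.norm_eq_abs, ← abs_neg, hu]
        congr 1
        field_simp
        ring
    _ = x * |cos (t / √x) - (1 - (t / √x) ^ 2 / 2)| := by rw [abs_mul, abs_of_pos hx]
    _ ≤ x * (|t / √x| ^ 4 * (5 / 96)) := by gcongr; exact cos_bound hu1
    _ = 5 / 96 * t ^ 4 / x := by
        rw [hu4]
        field_simp

lemma two_div_pi_sq_mul_sq_le_mul_one_sub_cos {x t : ℝ} (hx : 0 < x) (ht : |t| ≤ π * √x) :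
    2 / π ^ 2 * t ^ 2 ≤ x * (1 - cos (t / √x)) := by
  have hsx : 0 < √x := sqrt_pos.mpr hx
  have hu : |t / √x| ≤ π := by
    rw [abs_div, abs_of_pos hsx, div_le_iff₀ hsx]
    exact ht
  have hcos := cos_le_one_sub_mul_cos_sq hu
  calc 2 / π ^ 2 * t ^ 2 = x * (2 / π ^ 2 * (t / √x) ^ 2) := by
        rw [div_pow, sq_sqrt hx.le]
        field_simp
    _ ≤ x * (1 - cos (t / √x)) := by gcongr; linarith

lemma integral_Ioi_exp_neg_half_mul_sq :
    ∫ t in Ioi (0 : ℝ), exp (-(1 / 2) * t ^ 2) = √(π / 2) := by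
  rw [integral_gaussian_Ioi, show π / (1 / 2) = 2 ^ 2 * (π / 2) by ring,
    sqrt_mul (by positivity), sqrt_sq zero_le_two]
  ring

/-- The integrand of `√x * ∫ θ in 0..π, exp (-(x * (1 - cos θ))) * g θ` after `θ = t / √x`. -/
noncomputable def rescaledCosIntegrand (g : ℝ → ℝ) (x : ℝ) : ℝ → ℝ :=
  (Ioc 0 (π * √x)).indicator fun t => exp (-(x * (1 - cos (t / √x)))) * g (t / √x)

lemma integral_rescaledCosIntegrand (g : ℝ → ℝ) {x : ℝ} (hx : 0 < x) :
    ∫ t, rescaledCosIntegrand g x t =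
      √x * ∫ θ in (0 : ℝ)..π, exp (-(x * (1 - cos θ))) * g θ := by
  have hsx : √x ≠ 0 := (sqrt_pos.mpr hx).ne'
  rw [rescaledCosIntegrand, integral_indicator measurableSet_Ioc,
    ← intervalIntegral.integral_of_le (by positivity),
    intervalIntegral.integral_comp_div (fun θ => exp (-(x * (1 - cos θ))) * g θ) hsx,
    zero_div, mul_div_cancel_right₀ _ hsx, smul_eq_mul]

lemma norm_rescaledCosIntegrand_le {g : ℝ → ℝ} {C x : ℝ} (hC : ∀ θ ∈ Icc 0 π, ‖g θ‖ ≤ C)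
    (hx : 0 < x) (t : ℝ) : ‖rescaledCosIntegrand g x t‖ ≤ C * exp (-(2 / π ^ 2) * t ^ 2) := by
  have hC0 : 0 ≤ C := (norm_nonneg _).trans (hC 0 ⟨le_rfl, pi_pos.le⟩)
  by_cases ht : t ∈ Ioc 0 (π * √x)
  · have hsx : 0 < √x := sqrt_pos.mpr hx
    have hu : t / √x ∈ Icc 0 π := ⟨(div_pos ht.1 hsx).le, (div_le_iff₀ hsx).mpr ht.2⟩
    have hexp := two_div_pi_sq_mul_sq_le_mul_one_sub_cos hx (by rw [abs_of_pos ht.1]; exact ht.2)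
    rw [rescaledCosIntegrand, indicator_of_mem ht, norm_mul, Real.norm_of_nonneg (exp_nonneg _),
      mul_comm]
    gcongr
    · exact hC _ hu
    · linarith
  · rw [rescaledCosIntegrand, indicator_of_notMem ht, norm_zero]
    positivity

lemma tendsto_rescaledCosIntegrand {g : ℝ → ℝ} (hg : ContinuousAt g 0) (t : ℝ) :
    Tendsto (fun x => rescaledCosIntegrand g x t) atTop
      (𝓝 ((Ioi 0).indicator (fun t => exp (-(1 / 2) * t ^ 2) * g 0) t)) := by
  rcases le_or_gt t 0 with ht | ht
  · have hzero (x : ℝ) : rescaledCosIntegrand g x t = 0 :=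
      indicator_of_notMem (fun h => h.1.not_ge ht) _
    rw [indicator_of_notMem (notMem_Ioi.mpr ht)]
    simp only [hzero, tendsto_const_nhds]
  have hdiv : Tendsto (fun x => t / √x) atTop (𝓝 0) :=
    tendsto_const_nhds.div_atTop tendsto_sqrt_atTop
  have hmem : ∀ᶠ x in atTop, t ∈ Ioc 0 (π * √x) := by
    filter_upwards [(tendsto_sqrt_atTop.const_mul_atTop pi_pos).eventually_ge_atTop t]
      with x hx using ⟨ht, hx⟩
  have hval := ((continuous_exp.tendsto _).comp
    (tendsto_mul_one_sub_cos_div_sqrt t).neg).mul (hg.tendsto.comp hdiv)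
  rw [indicator_of_mem (mem_Ioi.mpr ht), show -(1 / 2) * t ^ 2 = -(t ^ 2 / 2) by ring]
  refine hval.congr' ?_
  filter_upwards [hmem] with x hx
  simp only [rescaledCosIntegrand, indicator_of_mem hx, Function.comp_apply]

theorem tendsto_sqrt_mul_integral_exp_neg_mul_one_sub_cos {g : ℝ → ℝ} (hg : Continuous g) :
    Tendsto (fun x => √x * ∫ θ in (0 : ℝ)..π, exp (-(x * (1 - cos θ))) * g θ) atTop
      (𝓝 (√(π / 2) * g 0)) := by
  obtain ⟨C, hC⟩ := isCompact_Icc.exists_bound_of_continuousOn (hg.continuousOn (s := Icc 0 π))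
  have hdom := tendsto_integral_filter_of_dominated_convergence _
    (.of_forall fun _ =>
      (Measurable.indicator (by fun_prop) measurableSet_Ioc).aestronglyMeasurable)
    ((eventually_gt_atTop 0).mono fun x hx => .of_forall (norm_rescaledCosIntegrand_le hC hx))
    ((integrable_exp_neg_mul_sq (by positivity)).const_mul C)
    (.of_forall (tendsto_rescaledCosIntegrand hg.continuousAt))
  rw [integral_indicator measurableSet_Ioi, integral_mul_const,
    integral_Ioi_exp_neg_half_mul_sq] at hdom
  exact hdom.congr' ((eventually_gt_atTop 0).mono fun x hx => integral_rescaledCosIntegrand g hx)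

lemma besselK_nonneg (N : ℕ) (x : ℝ) : 0 ≤ besselK N x :=
  setIntegral_nonneg measurableSet_Ioi fun _ _ => by positivity

lemma exp_neg_mul_cosh_mul_cosh_le {N : ℕ} {x s : ℝ} (hx : 2 * N + 2 ≤ x) (hs : 0 ≤ s) :
    exp (-x * cosh s) * cosh (N * s) ≤ exp (N + 1 - x) * exp (-s) := by
  have hNs : 0 ≤ (N : ℝ) * s := by positivity
  have hcoshN : cosh (N * s) ≤ exp (N * s) := by
    rw [cosh_eq]
    linarith [exp_le_exp.mpr (neg_le_self hNs)]
  have hcosh : (1 + s) / 2 ≤ cosh s := by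
    rw [cosh_eq]
    linarith [add_one_le_exp s, exp_nonneg (-s)]
  have hexponent : -x * cosh s + N * s ≤ N + 1 - x - s := by
    nlinarith [one_le_cosh s]
  calc exp (-x * cosh s) * cosh (N * s) ≤ exp (-x * cosh s) * exp (N * s) := by gcongr
    _ ≤ exp (N + 1 - x - s) := by rw [← exp_add]; exact exp_le_exp.mpr hexponent
    _ = exp (N + 1 - x) * exp (-s) := by rw [← exp_add]; ring_nf

lemma besselK_le_exp_mul_exp_neg {N : ℕ} {x : ℝ} (hx : 2 * N + 2 ≤ x) :
    besselK N x ≤ exp (N + 1) * exp (-x) := by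
  have hexp : IntegrableOn (fun s : ℝ => exp (-s)) (Ioi 0) := by
    simpa using exp_neg_integrableOn_Ioi 0 one_pos
  calc besselK N x ≤ ∫ s in Ioi 0, exp (N + 1 - x) * exp (-s) :=
        integral_mono_of_nonneg (.of_forall fun _ => by positivity) (hexp.const_mul _)
          ((ae_restrict_iff' measurableSet_Ioi).mpr
            (.of_forall fun _ hs => exp_neg_mul_cosh_mul_cosh_le hx (le_of_lt hs)))
    _ = exp (N + 1) * exp (-x) := by
        rw [integral_const_mul, integral_exp_neg_Ioi_zero, mul_one, ← exp_add]
        ring_nf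

lemma tendsto_mul_exp_neg_two_mul_mul_besselK_sq (N : ℕ) :
    Tendsto (fun x => x * exp (-2 * x) * besselK N x ^ 2) atTop (𝓝 0) := by
  have hlim : Tendsto (fun x => exp (N + 1) ^ 2 * (x ^ 1 * exp (-x))) atTop (𝓝 0) := by
    simpa using (tendsto_pow_mul_exp_neg_atTop_nhds_zero 1).const_mul (exp (N + 1) ^ 2)
  refine squeeze_zero' ?_ ?_ hlim
  · filter_upwards [eventually_ge_atTop 0] with x hx
    positivity
  · filter_upwards [eventually_ge_atTop (2 * N + 2 : ℝ)] with x hx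
    have hx0 : 0 ≤ x := le_trans (by positivity) hx
    have hK := pow_le_pow_left₀ (besselK_nonneg N x) (besselK_le_exp_mul_exp_neg hx) 2
    calc x * exp (-2 * x) * besselK N x ^ 2
        ≤ x * exp (-2 * x) * (exp (N + 1) * exp (-x)) ^ 2 := by gcongr
      _ = exp (N + 1) ^ 2 * (x * exp (-(4 * x))) := by
        have h4 : exp (-2 * x) * exp (-x) ^ 2 = exp (-(4 * x)) := by
          rw [← exp_nat_mul, ← exp_add]; ring_nf
        rw [mul_pow, ← h4]; ring
      _ ≤ exp (N + 1) ^ 2 * (x ^ 1 * exp (-x)) := by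
        rw [pow_one]; gcongr; linarith

theorem tendsto_sqrt_two_pi_mul_mul_exp_neg_mul_besselI (N : ℕ) :
    Tendsto (fun x => √(2 * π * x) * exp (-x) * besselI N x) atTop (𝓝 1) := by
  have h := (tendsto_sqrt_mul_integral_exp_neg_mul_one_sub_cos
    (g := fun θ => cos (N * θ)) (by fun_prop)).const_mul (√2 / √π)
  rw [mul_zero, cos_zero, mul_one, sqrt_div' _ zero_le_two, div_mul_div_comm,
    mul_comm √π, div_self (by positivity)] at h
  refine h.congr' ?_
  filter_upwards [eventually_ge_atTop 0] with x hx
  have hint : ∫ θ in (0 : ℝ)..π, exp (-(x * (1 - cos θ))) * cos (N * θ) =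
      exp (-x) * (π * besselI N x) := by
    rw [← integral_exp_mul_cos_mul_cos_eq_pi_mul_besselI, ← intervalIntegral.integral_const_mul]
    congr 1 with θ
    rw [← mul_assoc, ← exp_add]
    ring_nf
  rw [hint, sqrt_mul' _ hx, sqrt_mul zero_le_two]
  field_simp
  rw [sq_sqrt pi_pos.le]
  ring

theorem G_asymptotic_at_top (N : ℕ) :
    Tendsto (fun x : ℝ => 2 * x * Real.exp (-2 * x) / Real.pi * G N x) atTop (𝓝 1) := by
  have hK := (tendsto_mul_exp_neg_two_mul_mul_besselK_sq N).const_mul (2 / π)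
  have hI := (tendsto_sqrt_two_pi_mul_mul_exp_neg_mul_besselI N).pow 2
  have hsum := hK.add hI
  rw [mul_zero, one_pow, zero_add] at hsum
  refine hsum.congr' ?_
  filter_upwards [eventually_ge_atTop 0] with x hx
  have hexp : exp (-x) ^ 2 = exp (-2 * x) := by rw [← exp_nat_mul]; ring_nf
  rw [G, mul_pow, mul_pow, sq_sqrt (by positivity), hexp]
  field_simp
end

section
/- Let N ≥ 0 be an integer. Then for every real number p, the function y ↦ 1/(y^p·G_N(y)) is integrable on [1, ∞). -/
/-!
`G_N ≥ π² I_N²`, and on `[0, ∞)` the power series of `I_N` has nonnegative terms, so `I_N(y)`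
dominates its term of degree `2m + N` for every `m`. Hence `G_N` outgrows every power of `y`,
and on `[1, ∞)` the integrand `1 / (y ^ p G_N(y))` is bounded by a multiple of `y⁻²`.
-/

open Real MeasureTheory Filter Set Topology

noncomputable def besselITerm (N : ℕ) (x : ℝ) (n : ℕ) : ℝ :=
  (x / 2) ^ (2 * n + N) / ((Nat.factorial n : ℝ) * (Nat.factorial (n + N) : ℝ))

lemma norm_besselITerm_le (N : ℕ) (x : ℝ) (n : ℕ) :
    ‖besselITerm N x n‖ ≤ (|x| / 2) ^ N * (((|x| / 2) ^ 2) ^ n / n.factorial) := by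
  have hfac : (1 : ℝ) ≤ (n + N).factorial := by exact_mod_cast (n + N).factorial_pos
  have hpow : (|x| / 2) ^ (2 * n + N) = (|x| / 2) ^ N * ((|x| / 2) ^ 2) ^ n := by
    rw [← pow_mul, ← pow_add, add_comm]
  rw [besselITerm, norm_div, norm_pow, norm_div, Real.norm_two, Real.norm_eq_abs,
    norm_of_nonneg (by positivity), hpow, mul_div_assoc]
  gcongr
  exact le_mul_of_one_le_right (by positivity) hfac

lemma summable_besselITerm (N : ℕ) (x : ℝ) : Summable (besselITerm N x) :=
  .of_norm_bounded ((Real.summable_pow_div_factorial _).mul_left _) (norm_besselITerm_le N x)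

lemma besselITerm_nonneg (N n : ℕ) {x : ℝ} (hx : 0 ≤ x) : 0 ≤ besselITerm N x n := by
  unfold besselITerm; positivity

lemma besselITerm_le_besselI (N m : ℕ) {x : ℝ} (hx : 0 ≤ x) : besselITerm N x m ≤ besselI N x :=
  (summable_besselITerm N x).le_tsum m fun n _ => besselITerm_nonneg N n hx

lemma measurable_besselI (N : ℕ) : Measurable (besselI N) := by
  refine measurable_of_tendsto_metrizable (f := fun k x => ∑ n ∈ Finset.range k, besselITerm N x n)
    (fun k => Finset.measurable_sum _ fun n _ => ?_) (tendsto_pi_nhds.mpr fun x =>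
      (summable_besselITerm N x).hasSum.tendsto_sum_nat)
  exact ((measurable_id.div_const 2).pow_const _).div_const _

lemma measurable_besselK (N : ℕ) : Measurable (besselK N) := by
  have h : StronglyMeasurable fun q : ℝ × ℝ => exp (-q.1 * cosh q.2) * cosh (N * q.2) :=
    (by fun_prop : Continuous _).stronglyMeasurable
  exact h.integral_prod_right'.measurable

lemma measurable_G (N : ℕ) : Measurable (G N) :=
  ((measurable_besselK N).pow_const 2).add (((measurable_besselI N).pow_const 2).const_mul _)

lemma pi_sq_mul_besselI_sq_le_G (N : ℕ) (x : ℝ) : π ^ 2 * besselI N x ^ 2 ≤ G N x :=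
  le_add_of_nonneg_left (sq_nonneg _)

lemma exists_mul_rpow_le_G (N : ℕ) (q : ℝ) : ∃ c > 0, ∀ y : ℝ, 1 ≤ y → c * y ^ q ≤ G N y := by
  obtain ⟨m, hm⟩ := exists_nat_ge (q / 4)
  set k := 2 * m + N
  set C := (2 ^ k * (m.factorial * (m + N).factorial) : ℝ)
  refine ⟨π ^ 2 / C ^ 2, by positivity, fun y hy => ?_⟩
  have hqk : q ≤ ((2 * k : ℕ) : ℝ) := by push_cast [k]; linarith [(Nat.cast_nonneg N : (0 : ℝ) ≤ N)]
  have hy0 : 0 ≤ y := zero_le_one.trans hy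
  calc π ^ 2 / C ^ 2 * y ^ q ≤ π ^ 2 / C ^ 2 * y ^ ((2 * k : ℕ) : ℝ) := by gcongr
    _ = π ^ 2 * besselITerm N y m ^ 2 := by
        rw [rpow_natCast, besselITerm, div_pow y, pow_mul']; ring
    _ ≤ π ^ 2 * besselI N y ^ 2 := by
        gcongr
        exacts [besselITerm_nonneg N m hy0, besselITerm_le_besselI N m hy0]
    _ ≤ G N y := pi_sq_mul_besselI_sq_le_G N y

lemma integrableOn_Ici_one_one_div_of_mul_rpow_le {f : ℝ → ℝ} (hf : Measurable f) {c q : ℝ}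
    (hc : 0 < c) (hq : 1 < q) (hle : ∀ y : ℝ, 1 ≤ y → c * y ^ q ≤ f y) :
    IntegrableOn (fun y => 1 / f y) (Ici 1) := by
  have hdom : IntegrableOn (fun y : ℝ => c⁻¹ * y ^ (-q)) (Ici 1) :=
    (integrableOn_Ici_iff_integrableOn_Ioi (by simp)).mpr
      ((integrableOn_Ioi_rpow_of_lt (by linarith) one_pos).const_mul _)
  refine hdom.mono' (hf.const_div 1).aestronglyMeasurable
    ((ae_restrict_iff' measurableSet_Ici).mpr (.of_forall fun y (hy : 1 ≤ y) => ?_))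
  have hyq : 0 < c * y ^ q := mul_pos hc (rpow_pos_of_pos (by linarith) q)
  rw [norm_of_nonneg (one_div_nonneg.mpr (hyq.le.trans (hle y hy))), rpow_neg (by linarith),
    ← mul_inv, ← one_div]
  exact one_div_le_one_div_of_le hyq (hle y hy)

theorem integrable_inv_rpow_mul_G_Ici_one (N : ℕ) (p : ℝ) :
    IntegrableOn (fun y : ℝ => 1 / (y ^ p * G N y)) (Ici (1 : ℝ)) := by
  obtain ⟨c, hc, hG⟩ := exists_mul_rpow_le_G N (2 - p)
  refine integrableOn_Ici_one_one_div_of_mul_rpow_le ((measurable_id.pow_const p).mul (measurable_G N))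
    hc one_lt_two fun y hy => ?_
  have hy0 : 0 < y := by linarith
  calc c * y ^ (2 : ℝ) = y ^ p * (c * y ^ (2 - p)) := by
        rw [mul_left_comm, ← rpow_add hy0, add_sub_cancel]
    _ ≤ y ^ p * G N y := by gcongr; exact hG y hy
end

section
/- Let z ∈ ℂ with Re z < 0, let r > 0 and let K ≥ 0 be an integer. Then, as t → ∞, ∫_0^∞ exp(−r²x²/(2t) + z·x) dx = −∑_{n=0}^{K} b_n·r^{2n}/(2^n·z^{2n+1})·t^{−n} + O(t^{−(K+1)}). -/
/-!
Write `a = r² / (2t)`. On `x ≥ 0` the argument `-a x²` of the Gaussian factor is nonpositive,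
so the Lagrange remainder of the Taylor expansion of `exp` at `0` gives
`|e^{-a x²} - ∑_{n ≤ K} (-a x²)ⁿ / n!| ≤ (a x²)^{K+1} / (K+1)!`.
Integrating against `e^{zx}` termwise with `∫₀^∞ x^m e^{zx} dx = m! / (-z)^{m+1}` produces exactly
the terms `-bₙ r^{2n} / (2ⁿ z^{2n+1}) t^{-n}`, and the remainder contributes at most
`a^{K+1} / (K+1)! · ∫₀^∞ x^{2K+2} e^{x Re z} dx`, a constant multiple of `t^{-(K+1)}`.
-/

open Real MeasureTheory Filter Set Topology

noncomputable def b (m : ℕ) : ℝ :=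
  (-1) ^ m * (Nat.factorial (2 * m) : ℝ) / (Nat.factorial m : ℝ)

open scoped Nat

namespace Real

lemma taylorWithinEval_exp_zero {s : Set ℝ} (hs : UniqueDiffOn ℝ s) (h0 : (0 : ℝ) ∈ s)
    (n : ℕ) (x : ℝ) :
    taylorWithinEval exp n s 0 x = ∑ i ∈ Finset.range (n + 1), x ^ i / i ! := by
  rw [taylor_within_apply]
  refine Finset.sum_congr rfl fun i _ => ?_
  rw [iteratedDerivWithin_eq_iteratedDeriv hs contDiff_exp.contDiffAt h0,
    iteratedDeriv_eq_iterate, iter_deriv_exp, exp_zero, smul_eq_mul, sub_zero]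
  ring

lemma abs_exp_sub_sum_range_le_of_nonpos {x : ℝ} (hx : x ≤ 0) (n : ℕ) :
    |exp x - ∑ i ∈ Finset.range n, x ^ i / i !| ≤ |x| ^ n / n ! := by
  rcases hx.lt_or_eq with hx | rfl
  · cases n with
    | zero => simpa [abs_of_pos (exp_pos x)] using hx.le
    | succ n =>
      obtain ⟨ξ, hξ, h⟩ := taylor_mean_remainder_lagrange_iteratedDeriv (f := exp) (n := n)
        hx.ne' contDiff_exp.contDiffOn
      rw [taylorWithinEval_exp_zero (uniqueDiffOn_uIcc hx.ne') left_mem_uIcc,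
        iteratedDeriv_eq_iterate, iter_deriv_exp, sub_zero] at h
      have hξ : ξ < 0 := hξ.2.trans_eq (max_eq_left hx.le)
      rw [h, abs_div, abs_mul, abs_pow, abs_of_pos (exp_pos ξ), Nat.abs_cast]
      gcongr
      exact mul_le_of_le_one_left (by positivity) (exp_le_one_iff.mpr hξ.le)
  · cases n <;> simp [Finset.sum_range_succ']

end Real

section Moments

variable {z : ℂ}

lemma norm_ofReal_pow_mul_cexp {x : ℝ} (hx : 0 ≤ x) (m : ℕ) (z : ℂ) :
    ‖(x : ℂ) ^ m * Complex.exp (z * x)‖ = x ^ m * rexp (z.re * x) := by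
  rw [norm_mul, norm_pow, Complex.norm_exp, Complex.norm_real, norm_of_nonneg hx,
    Complex.re_mul_ofReal]

lemma integrableOn_pow_mul_exp_mul_Ioi {c : ℝ} (hc : c < 0) (m : ℕ) :
    IntegrableOn (fun x : ℝ => x ^ m * rexp (c * x)) (Ioi 0) := by
  refine (integrableOn_rpow_mul_exp_neg_mul_rpow (s := m) (neg_one_lt_zero.trans_le m.cast_nonneg)
    one_pos (neg_pos.mpr hc)).congr_fun (fun x _ => ?_) measurableSet_Ioi
  simp

lemma integrableOn_ofReal_pow_mul_cexp_Ioi (hz : z.re < 0) (m : ℕ) :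
    IntegrableOn (fun x : ℝ => (x : ℂ) ^ m * Complex.exp (z * x)) (Ioi 0) := by
  refine (integrableOn_pow_mul_exp_mul_Ioi hz m).mono' (by fun_prop) ?_
  filter_upwards [ae_restrict_mem measurableSet_Ioi] with x hx
  exact (norm_ofReal_pow_mul_cexp (le_of_lt hx) m z).le

lemma tendsto_ofReal_pow_mul_cexp_atTop (hz : z.re < 0) (m : ℕ) :
    Tendsto (fun x : ℝ => (x : ℂ) ^ m * Complex.exp (z * x)) atTop (𝓝 0) := by
  rw [tendsto_zero_iff_norm_tendsto_zero]
  refine (tendsto_rpow_mul_exp_neg_mul_atTop_nhds_zero m (-z.re) (neg_pos.mpr hz)).congr' ?_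
  filter_upwards [eventually_ge_atTop 0] with x hx
  rw [norm_ofReal_pow_mul_cexp hx, rpow_natCast, neg_neg]

lemma integral_ofReal_pow_mul_cexp_Ioi (hz : z.re < 0) (m : ℕ) :
    ∫ x in Ioi (0 : ℝ), (x : ℂ) ^ m * Complex.exp (z * x) = m ! / (-z) ^ (m + 1) := by
  have hz0 : z ≠ 0 := by rintro rfl; simp at hz
  induction m with
  | zero => simp [integral_exp_mul_complex_Ioi hz, div_neg, neg_div]
  | succ m ih =>
    have hderiv : ∀ x : ℝ, HasDerivAt (fun x : ℝ => (x : ℂ) ^ (m + 1) * Complex.exp (z * x))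
        ((m + 1 : ℂ) * ((x : ℂ) ^ m * Complex.exp (z * x)) +
          z * ((x : ℂ) ^ (m + 1) * Complex.exp (z * x))) x := by
      intro x
      refine (((hasDerivAt_pow (m + 1) (x : ℂ)).mul
        ((hasDerivAt_id (x : ℂ)).const_mul z).cexp).comp_ofReal).congr_deriv ?_
      simp only [id, Nat.add_sub_cancel]
      push_cast
      ring
    have hint₁ := (integrableOn_ofReal_pow_mul_cexp_Ioi hz m).const_mul (m + 1 : ℂ)
    have hint₂ := (integrableOn_ofReal_pow_mul_cexp_Ioi hz (m + 1)).const_mul z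
    have hparts := integral_Ioi_of_hasDerivAt_of_tendsto' (fun x _ => hderiv x)
      (hint₁.add hint₂) (tendsto_ofReal_pow_mul_cexp_atTop hz (m + 1))
    rw [integral_add hint₁ hint₂, integral_const_mul, integral_const_mul, ih] at hparts
    simp only [Complex.ofReal_zero, ne_eq, add_eq_zero, one_ne_zero, and_false,
      not_false_eq_true, zero_pow, zero_mul, sub_zero] at hparts
    rw [Nat.factorial_succ, pow_succ]
    push_cast
    field_simp
    linear_combination hparts

end Moments

theorem norm_integral_exp_neg_mul_sq_add_mul_sub_sum_le {z : ℂ} (hz : z.re < 0) {a : ℝ}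
    (ha : 0 ≤ a) (N : ℕ) :
    ‖(∫ x in Ioi (0 : ℝ), Complex.exp (-((a * x ^ 2 : ℝ) : ℂ) + z * x)) -
        ∑ n ∈ Finset.range N, (((-a) ^ n / n ! : ℝ) : ℂ) * ((2 * n) ! / (-z) ^ (2 * n + 1))‖ ≤
      a ^ N / N ! * ∫ x in Ioi (0 : ℝ), x ^ (2 * N) * rexp (z.re * x) := by
  set term : ℕ → ℝ → ℂ := fun n x =>
    (((-a) ^ n / n ! : ℝ) : ℂ) * ((x : ℂ) ^ (2 * n) * Complex.exp (z * x))
  have hterm : ∀ n, IntegrableOn (term n) (Ioi 0) := fun n =>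
    (integrableOn_ofReal_pow_mul_cexp_Ioi hz (2 * n)).const_mul _
  have hsum : ∑ n ∈ Finset.range N, (((-a) ^ n / n ! : ℝ) : ℂ) * ((2 * n) ! / (-z) ^ (2 * n + 1))
      = ∫ x in Ioi (0 : ℝ), ∑ n ∈ Finset.range N, term n x := by
    rw [integral_finsetSum _ fun n _ => hterm n]
    simp only [term, integral_const_mul, integral_ofReal_pow_mul_cexp_Ioi hz]
  have hgauss : IntegrableOn (fun x : ℝ => Complex.exp (-((a * x ^ 2 : ℝ) : ℂ) + z * x))
      (Ioi 0) := by
    refine (integrableOn_exp_mul_Ioi hz 0).mono' (by fun_prop) ?_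
    filter_upwards with x
    rw [Complex.norm_exp, Complex.add_re, Complex.neg_re, Complex.ofReal_re,
      Complex.re_mul_ofReal, exp_le_exp]
    nlinarith [sq_nonneg x]
  rw [hsum, ← integral_sub hgauss (integrable_finsetSum _ fun n _ => hterm n),
    ← integral_const_mul]
  refine norm_integral_le_of_norm_le
    ((integrableOn_pow_mul_exp_mul_Ioi hz (2 * N)).const_mul _) ?_
  filter_upwards [ae_restrict_mem measurableSet_Ioi] with x hx
  have hremainder : Complex.exp (-((a * x ^ 2 : ℝ) : ℂ) + z * x) -
      ∑ n ∈ Finset.range N, term n x =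
      ((rexp (-(a * x ^ 2)) - ∑ n ∈ Finset.range N, (-(a * x ^ 2)) ^ n / n ! : ℝ) : ℂ) *
        Complex.exp (z * x) := by
    push_cast
    rw [Complex.exp_add, sub_mul, Finset.sum_mul]
    congr 1
    refine Finset.sum_congr rfl fun n _ => ?_
    simp only [term]
    push_cast
    ring
  rw [hremainder, norm_mul, Complex.norm_exp, Complex.re_mul_ofReal, Complex.norm_real,
    norm_eq_abs]
  calc _ ≤ |-(a * x ^ 2)| ^ N / N ! * rexp (z.re * x) := by
        gcongr
        exact abs_exp_sub_sum_range_le_of_nonpos (by nlinarith [sq_nonneg x]) N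
    _ = _ := by
        rw [abs_neg, abs_of_nonneg (by positivity)]
        ring

lemma ofReal_b_mul_zpow_eq_neg (z : ℂ) (r t : ℝ) (n : ℕ) :
    ((b n * r ^ (2 * n) / 2 ^ n : ℝ) : ℂ) * z ^ (-(2 * (n : ℤ) + 1)) * ((t ^ (-(n : ℤ)) : ℝ) : ℂ) =
      -((((-(r ^ 2 / (2 * t))) ^ n / n ! : ℝ) : ℂ) * ((2 * n) ! / (-z) ^ (2 * n + 1))) := by
  rw [show -(2 * (n : ℤ) + 1) = -((2 * n + 1 : ℕ) : ℤ) by push_cast; ring, zpow_neg, zpow_natCast,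
    zpow_neg, zpow_natCast, Odd.neg_pow ⟨n, rfl⟩, neg_pow (r ^ 2 / (2 * t)), b]
  push_cast
  simp only [div_pow, mul_pow]
  field_simp
  ring

theorem gaussian_exp_integral_expansion_general (z : ℂ) (hz : z.re < 0) (r : ℝ) (K : ℕ) :
    (fun t : ℝ =>
        (∫ x in Ioi (0 : ℝ),
            Complex.exp (-((r ^ 2 * x ^ 2 / (2 * t) : ℝ) : ℂ) + z * (x : ℂ)))
          + ∑ n ∈ Finset.range (K + 1),
              ((b n * r ^ (2 * n) / 2 ^ n : ℝ) : ℂ) * z ^ (-(2 * (n : ℤ) + 1)) *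
                ((t ^ (-(n : ℤ)) : ℝ) : ℂ))
      =O[atTop] fun t : ℝ => t ^ (-((K : ℤ) + 1)) := by
  refine Asymptotics.IsBigO.of_bound ((r ^ 2 / 2) ^ (K + 1) / (K + 1)! *
    ∫ x in Ioi (0 : ℝ), x ^ (2 * (K + 1)) * rexp (z.re * x)) ?_
  filter_upwards [eventually_gt_atTop 0] with t ht
  have hgauss (x : ℝ) : r ^ 2 * x ^ 2 / (2 * t) = r ^ 2 / (2 * t) * x ^ 2 := by ring
  simp only [hgauss, ofReal_b_mul_zpow_eq_neg, Finset.sum_neg_distrib, ← sub_eq_add_neg]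
  refine (norm_integral_exp_neg_mul_sq_add_mul_sub_sum_le hz (by positivity) (K + 1)).trans_eq ?_
  rw [norm_of_nonneg (zpow_nonneg ht.le _),
    show -((K : ℤ) + 1) = -((K + 1 : ℕ) : ℤ) by push_cast; ring,
    zpow_neg, zpow_natCast, div_pow, div_pow, mul_pow]
  field_simp

theorem gaussian_exp_integral_expansion (z : ℂ) (hz : z.re < 0) (r : ℝ) (hr : 0 < r) (K : ℕ) :
    (fun t : ℝ =>
        (∫ x in Ioi (0 : ℝ),
            Complex.exp (-((r ^ 2 * x ^ 2 / (2 * t) : ℝ) : ℂ) + z * (x : ℂ)))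
          + ∑ n ∈ Finset.range (K + 1),
              ((b n * r ^ (2 * n) / 2 ^ n : ℝ) : ℂ) * z ^ (-(2 * (n : ℤ) + 1)) *
                ((t ^ (-(n : ℤ)) : ℝ) : ℂ))
      =O[atTop] fun t : ℝ => t ^ (-((K : ℤ) + 1)) :=
  gaussian_exp_integral_expansion_general z hz r K
end

section
/- For all integers α ≥ 0 and β ≥ 0, the double integral ∫_0^∞ ∫_0^∞ v^{2α+1}·(log(1/v))^β·e^{−uv}·|R_α(u²)| du dv is finite. -/
open Real MeasureTheory Filter Set Topology

/-- Remainder of the Taylor expansion of `e^{-x}`. -/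
noncomputable def R (n : ℕ) (x : ℝ) : ℝ :=
  Real.exp (-x) - ∑ k ∈ Finset.range (n + 1), (-1) ^ k * x ^ k / (Nat.factorial k : ℝ)

open scoped Nat

/-!
By Tonelli it suffices to integrate in `v` the function `v ^ (2α+1) |log v| ^ β L(v)`, where
`L(v) = ∫₀^∞ e^{-uv} |R_α(u²)| du` is `laplaceAbsR α v`. Since `R_{n+1}' = -R_n` and `R_n(0) = 0`,
induction gives `|R_n(x)| ≤ x^{n+1}/(n+1)!` for `x ≥ 0`, while trivially
`|R_n(x)| ≤ (n+2)(1+x^n)`. Against `e^{-uv}` these give, via Gamma integrals,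
`L(v) = O(v^{-(2α+3)})` and, for `v ≤ 1`, `L(v) = O(v^{-(2α+1)})`. With `|log v|^β = O(v^{∓1/2})`,
the outer integrand is `O(v^{-1/2})` on `(0,1]` and `O(v^{-3/2})` on `(1,∞)`.
-/

theorem integrableOn_prod_of_integral_norm_le {α β E : Type*} [MeasurableSpace α]
    [MeasurableSpace β] [NormedAddCommGroup E] {μ : Measure α} {ν : Measure β} [SFinite μ]
    [SFinite ν] {f : α × β → E} {g : α → ℝ} {s : Set α} {t : Set β} (hs : MeasurableSet s)
    (hf : AEStronglyMeasurable f (μ.prod ν)) (hfx : ∀ x ∈ s, IntegrableOn (fun y => f (x, y)) t ν)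
    (hg : IntegrableOn g s μ) (hfg : ∀ x ∈ s, ∫ y in t, ‖f (x, y)‖ ∂ν ≤ g x) :
    IntegrableOn f (s ×ˢ t) (μ.prod ν) := by
  have hf' : AEStronglyMeasurable f ((μ.restrict s).prod (ν.restrict t)) := by
    rw [Measure.prod_restrict]; exact hf.restrict
  rw [IntegrableOn, ← Measure.prod_restrict, integrable_prod_iff hf']
  refine ⟨(ae_restrict_mem hs).mono hfx, hg.mono' hf'.norm.integral_prod_right' ?_⟩
  filter_upwards [ae_restrict_mem hs] with x hx
  rw [norm_of_nonneg (integral_nonneg fun _ => norm_nonneg _)]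
  exact hfg x hx

lemma log_pow_le_mul_rpow (k : ℕ) {ε y : ℝ} (hε : 0 < ε) (hy : 1 ≤ y) :
    log y ^ k ≤ ((k + 1) / ε) ^ k * y ^ ε := by
  set δ := ε / (k + 1) with hδ_def
  have hδ : 0 < δ := by positivity
  have hδk : δ * k ≤ ε := by
    rw [hδ_def, div_mul_eq_mul_div, div_le_iff₀ (by positivity)]
    nlinarith
  calc log y ^ k ≤ (y ^ δ / δ) ^ k :=
        pow_le_pow_left₀ (log_nonneg hy) (log_le_rpow_div (by linarith) hδ) k
    _ = (1 / δ) ^ k * (y ^ δ) ^ k := by ring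
    _ = ((k + 1) / ε) ^ k * y ^ (δ * k) := by
        rw [one_div_div, rpow_mul (by linarith), rpow_natCast]
    _ ≤ ((k + 1) / ε) ^ k * y ^ ε := by gcongr

lemma integrableOn_pow_mul_exp_neg_mul (m : ℕ) {v : ℝ} (hv : 0 < v) :
    IntegrableOn (fun u : ℝ => u ^ m * exp (-u * v)) (Ioi 0) := by
  simpa [mul_comm v] using
    integrableOn_rpow_mul_exp_neg_mul_rpow (s := m) (p := 1) (by linarith [m.cast_nonneg (α := ℝ)])
      one_pos hv

lemma integral_pow_mul_exp_neg_mul (m : ℕ) {v : ℝ} (hv : 0 < v) :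
    ∫ u in Ioi (0 : ℝ), u ^ m * exp (-u * v) = m ! / v ^ (m + 1) := by
  have h := integral_rpow_mul_exp_neg_mul_Ioi (a := m + 1) (by positivity) hv
  rw [add_sub_cancel_right, Gamma_nat_eq_factorial, ← Nat.cast_succ, rpow_natCast] at h
  rw [div_eq_mul_one_div, mul_comm, ← one_div_pow, ← h]
  refine setIntegral_congr_fun measurableSet_Ioi fun u _ => ?_
  simp [rpow_natCast, mul_comm v]

lemma R_apply_zero (n : ℕ) : R n 0 = 0 := by
  simp [R, Finset.sum_range_succ']

lemma continuous_R (n : ℕ) : Continuous (R n) := by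
  unfold R; fun_prop

lemma hasDerivAt_R_succ (n : ℕ) (x : ℝ) : HasDerivAt (R (n + 1)) (-R n x) x := by
  have hexp : HasDerivAt (fun x : ℝ => exp (-x)) (-exp (-x)) x := by
    simpa using (hasDerivAt_neg x).exp
  have hterm (k : ℕ) : HasDerivAt (fun x : ℝ => (-1) ^ k * x ^ k / (k ! : ℝ))
      ((-1) ^ k * (k * x ^ (k - 1)) / (k ! : ℝ)) x :=
    ((hasDerivAt_pow k x).const_mul _).div_const _
  have hsum : ∑ k ∈ Finset.range (n + 2), (-1 : ℝ) ^ k * (k * x ^ (k - 1)) / (k ! : ℝ)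
      = -∑ k ∈ Finset.range (n + 1), (-1 : ℝ) ^ k * x ^ k / (k ! : ℝ) := by
    rw [Finset.sum_range_succ', ← Finset.sum_neg_distrib]
    simp only [Nat.cast_zero, zero_mul, mul_zero, zero_div, add_zero]
    refine Finset.sum_congr rfl fun k _ => ?_
    rw [Nat.factorial_succ]
    push_cast
    field_simp
    ring
  have h : HasDerivAt (R (n + 1)) (-exp (-x) -
      ∑ k ∈ Finset.range (n + 2), (-1 : ℝ) ^ k * (k * x ^ (k - 1)) / (k ! : ℝ)) x :=
    hexp.sub (HasDerivAt.fun_sum fun k _ => hterm k)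
  exact h.congr_deriv (by rw [hsum, R]; ring)

lemma R_succ_eq_neg_integral (n : ℕ) (x : ℝ) : R (n + 1) x = -∫ t in (0 : ℝ)..x, R n t := by
  rw [intervalIntegral.integral_neg.symm.trans <| intervalIntegral.integral_eq_sub_of_hasDerivAt
    (fun t _ => hasDerivAt_R_succ n t) ((continuous_R n).neg.intervalIntegrable 0 x), R_apply_zero]
  ring

lemma abs_R_le_pow_div_factorial (n : ℕ) {x : ℝ} (hx : 0 ≤ x) :
    |R n x| ≤ x ^ (n + 1) / ((n + 1) ! : ℝ) := by
  induction n generalizing x with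
  | zero =>
    have hle : exp (-x) ≤ 1 := exp_le_one_iff.2 (by linarith)
    have hge : 1 - x ≤ exp (-x) := by linarith [add_one_le_exp (-x)]
    simp only [R, zero_add, Finset.sum_range_one, pow_zero, Nat.factorial_zero, Nat.cast_one,
      div_one, mul_one, pow_one, Nat.factorial_one, abs_le]
    constructor <;> linarith
  | succ n ih =>
    calc |R (n + 1) x| = |∫ t in (0 : ℝ)..x, R n t| := by rw [R_succ_eq_neg_integral, abs_neg]
      _ ≤ ∫ t in (0 : ℝ)..x, |R n t| := intervalIntegral.abs_integral_le_integral_abs hx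
      _ ≤ ∫ t in (0 : ℝ)..x, t ^ (n + 1) / ((n + 1) ! : ℝ) :=
          intervalIntegral.integral_mono_on hx ((continuous_R n).abs.intervalIntegrable 0 x)
            ((continuous_pow _).div_const _ |>.intervalIntegrable 0 x) fun t ht => ih ht.1
      _ = x ^ (n + 2) / ((n + 2) ! : ℝ) := by
          rw [intervalIntegral.integral_div, integral_pow, Nat.factorial_succ (n + 1)]
          push_cast
          field_simp
          ring

lemma abs_R_le_mul_one_add_pow (n : ℕ) {x : ℝ} (hx : 0 ≤ x) :
    |R n x| ≤ (n + 2) * (1 + x ^ n) := by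
  have hterm : ∀ k ∈ Finset.range (n + 1), |(-1 : ℝ) ^ k * x ^ k / (k ! : ℝ)| ≤ 1 + x ^ n := by
    intro k hk
    rw [abs_div, abs_mul, abs_pow, abs_neg, abs_one, one_pow, one_mul, abs_pow, abs_of_nonneg hx,
      Nat.abs_cast]
    refine (div_le_self (by positivity) (by exact_mod_cast k.factorial_pos)).trans ?_
    rcases le_total x 1 with hx1 | hx1
    · linarith [pow_le_one₀ hx hx1 (n := k), pow_nonneg hx n]
    · linarith [pow_le_pow_right₀ hx1 (Finset.mem_range_succ_iff.1 hk)]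
  calc |R n x|
      ≤ |exp (-x)| + |∑ k ∈ Finset.range (n + 1), (-1 : ℝ) ^ k * x ^ k / (k ! : ℝ)| :=
        abs_sub _ _
    _ ≤ 1 + (n + 1) * (1 + x ^ n) := by
        gcongr
        · rw [abs_of_pos (exp_pos _)]; exact exp_le_one_iff.2 (by linarith)
        · refine (Finset.abs_sum_le_sum_abs _ _).trans ((Finset.sum_le_sum hterm).trans_eq ?_)
          simp only [Finset.sum_const, Finset.card_range, nsmul_eq_mul, Nat.cast_succ]
    _ ≤ (n + 2) * (1 + x ^ n) := by nlinarith [pow_nonneg hx n]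

lemma exp_neg_mul_abs_R_sq_le (n : ℕ) (u v : ℝ) :
    exp (-u * v) * |R n (u ^ 2)| ≤ ((n + 1) ! : ℝ)⁻¹ * (u ^ (2 * n + 2) * exp (-u * v)) := by
  calc exp (-u * v) * |R n (u ^ 2)| ≤ exp (-u * v) * ((u ^ 2) ^ (n + 1) / ((n + 1) ! : ℝ)) :=
        mul_le_mul_of_nonneg_left (abs_R_le_pow_div_factorial n (sq_nonneg u)) (exp_pos _).le
    _ = ((n + 1) ! : ℝ)⁻¹ * (u ^ (2 * n + 2) * exp (-u * v)) := by ring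

lemma exp_neg_mul_abs_R_sq_le_add (n : ℕ) (u v : ℝ) :
    exp (-u * v) * |R n (u ^ 2)|
      ≤ (n + 2) * (u ^ 0 * exp (-u * v)) + (n + 2) * (u ^ (2 * n) * exp (-u * v)) := by
  calc exp (-u * v) * |R n (u ^ 2)| ≤ exp (-u * v) * ((n + 2) * (1 + (u ^ 2) ^ n)) :=
        mul_le_mul_of_nonneg_left (abs_R_le_mul_one_add_pow n (sq_nonneg u)) (exp_pos _).le
    _ = _ := by ring

lemma integrableOn_exp_neg_mul_abs_R_sq (n : ℕ) {v : ℝ} (hv : 0 < v) :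
    IntegrableOn (fun u : ℝ => exp (-u * v) * |R n (u ^ 2)|) (Ioi 0) := by
  refine Integrable.mono' ((integrableOn_pow_mul_exp_neg_mul (2 * n + 2) hv).const_mul
    ((n + 1) ! : ℝ)⁻¹) (Continuous.aestronglyMeasurable ?_) (ae_of_all _ fun u => ?_)
  · have := continuous_R n; fun_prop
  · rw [norm_of_nonneg (by positivity)]
    exact exp_neg_mul_abs_R_sq_le n u v

noncomputable def laplaceAbsR (n : ℕ) (v : ℝ) : ℝ :=
  ∫ u in Ioi (0 : ℝ), exp (-u * v) * |R n (u ^ 2)|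

lemma laplaceAbsR_nonneg (n : ℕ) (v : ℝ) : 0 ≤ laplaceAbsR n v :=
  integral_nonneg fun _ => by positivity

lemma laplaceAbsR_le (n : ℕ) {v : ℝ} (hv : 0 < v) :
    laplaceAbsR n v ≤ (2 * n + 2) ! / (n + 1) ! / v ^ (2 * n + 3) := by
  refine (setIntegral_mono_on (integrableOn_exp_neg_mul_abs_R_sq n hv)
    ((integrableOn_pow_mul_exp_neg_mul _ hv).const_mul _) measurableSet_Ioi
    fun u _ => exp_neg_mul_abs_R_sq_le n u v).trans_eq ?_
  rw [integral_const_mul, integral_pow_mul_exp_neg_mul _ hv]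
  ring

lemma laplaceAbsR_le_of_le_one (n : ℕ) {v : ℝ} (hv : 0 < v) (hv1 : v ≤ 1) :
    laplaceAbsR n v ≤ (n + 2) * (1 + (2 * n) !) / v ^ (2 * n + 1) := by
  have hint (m : ℕ) := (integrableOn_pow_mul_exp_neg_mul m hv).const_mul ((n : ℝ) + 2)
  have hpow : v ^ (2 * n + 1) ≤ v ^ 1 := pow_le_pow_of_le_one hv.le hv1 (by omega)
  calc laplaceAbsR n v ≤ (n + 2) * (1 / v) + (n + 2) * ((2 * n) ! / v ^ (2 * n + 1)) := by
        refine (setIntegral_mono_on (integrableOn_exp_neg_mul_abs_R_sq n hv)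
          ((hint 0).add (hint (2 * n))) measurableSet_Ioi
          fun u _ => exp_neg_mul_abs_R_sq_le_add n u v).trans_eq ?_
        rw [integral_add' (hint 0) (hint _), integral_const_mul, integral_const_mul,
          integral_pow_mul_exp_neg_mul _ hv, integral_pow_mul_exp_neg_mul _ hv]
        simp
    _ ≤ (n + 2) * (1 / v ^ (2 * n + 1)) + (n + 2) * ((2 * n) ! / v ^ (2 * n + 1)) := by
        gcongr
        simpa using hpow
    _ = (n + 2) * (1 + (2 * n) !) / v ^ (2 * n + 1) := by ring

lemma abs_log_pow_le_of_le_one (k : ℕ) {v : ℝ} (hv : 0 < v) (hv1 : v ≤ 1) :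
    |log v| ^ k ≤ (2 * k + 2) ^ k * v ^ (-(1 / 2) : ℝ) := by
  rw [abs_of_nonpos (log_nonpos hv.le hv1), ← log_inv, rpow_neg hv.le, ← inv_rpow hv.le]
  convert log_pow_le_mul_rpow k (by norm_num : (0 : ℝ) < 1 / 2) (one_le_inv₀ hv |>.2 hv1)
    using 2
  ring

lemma abs_log_pow_le_of_one_le (k : ℕ) {v : ℝ} (hv1 : 1 ≤ v) :
    |log v| ^ k ≤ (2 * k + 2) ^ k * v ^ (1 / 2 : ℝ) := by
  rw [abs_of_nonneg (log_nonneg hv1)]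
  convert log_pow_le_mul_rpow k (by norm_num : (0 : ℝ) < 1 / 2) hv1 using 2
  ring

lemma pow_mul_abs_log_pow_mul_laplaceAbsR_le_of_le_one (α β : ℕ) {v : ℝ} (hv : 0 < v)
    (hv1 : v ≤ 1) :
    v ^ (2 * α + 1) * |log v| ^ β * laplaceAbsR α v
      ≤ (2 * β + 2) ^ β * ((α + 2) * (1 + (2 * α) !)) * v ^ (-(1 / 2) : ℝ) := by
  calc v ^ (2 * α + 1) * |log v| ^ β * laplaceAbsR α v
      ≤ v ^ (2 * α + 1) * ((2 * β + 2) ^ β * v ^ (-(1 / 2) : ℝ))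
          * ((α + 2) * (1 + (2 * α) !) / v ^ (2 * α + 1)) :=
        mul_le_mul (by gcongr; exact abs_log_pow_le_of_le_one β hv hv1)
          (laplaceAbsR_le_of_le_one α hv hv1) (laplaceAbsR_nonneg α v) (by positivity)
    _ = (2 * β + 2) ^ β * ((α + 2) * (1 + (2 * α) !)) * v ^ (-(1 / 2) : ℝ) := by
        field_simp

lemma pow_mul_abs_log_pow_mul_laplaceAbsR_le_of_one_le (α β : ℕ) {v : ℝ} (hv1 : 1 ≤ v) :
    v ^ (2 * α + 1) * |log v| ^ β * laplaceAbsR α v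
      ≤ (2 * β + 2) ^ β * ((2 * α + 2) ! / (α + 1) !) * v ^ (-(3 / 2) : ℝ) := by
  have hv : 0 < v := by linarith
  calc v ^ (2 * α + 1) * |log v| ^ β * laplaceAbsR α v
      ≤ v ^ (2 * α + 1) * ((2 * β + 2) ^ β * v ^ (1 / 2 : ℝ))
          * ((2 * α + 2) ! / (α + 1) ! / v ^ (2 * α + 3)) :=
        mul_le_mul (by gcongr; exact abs_log_pow_le_of_one_le β hv1)
          (laplaceAbsR_le α hv) (laplaceAbsR_nonneg α v) (by positivity)
    _ = (2 * β + 2) ^ β * ((2 * α + 2) ! / (α + 1) !) * (v ^ (1 / 2 : ℝ) / v ^ (2 : ℝ)) := by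
        rw [rpow_two]
        field_simp
        ring
    _ = (2 * β + 2) ^ β * ((2 * α + 2) ! / (α + 1) !) * v ^ (-(3 / 2) : ℝ) := by
        rw [← rpow_sub hv]
        norm_num

noncomputable def integrand (α β : ℕ) (vu : ℝ × ℝ) : ℝ :=
  vu.1 ^ (2 * α + 1) * log (1 / vu.1) ^ β * exp (-vu.2 * vu.1) * |R α (vu.2 ^ 2)|

lemma measurable_integrand (α β : ℕ) : Measurable (integrand α β) := by
  have := (continuous_R α).measurable
  unfold integrand
  fun_prop

lemma integrableOn_integrand_slice (α β : ℕ) {v : ℝ} (hv : 0 < v) :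
    IntegrableOn (fun u => integrand α β (v, u)) (Ioi 0) := by
  refine ((integrableOn_exp_neg_mul_abs_R_sq α hv).const_mul
    (v ^ (2 * α + 1) * log (1 / v) ^ β)).congr (ae_of_all _ fun u => ?_)
  simp only [integrand]
  ring

lemma integral_norm_integrand_slice (α β : ℕ) {v : ℝ} (hv : 0 < v) :
    ∫ u in Ioi 0, ‖integrand α β (v, u)‖ = v ^ (2 * α + 1) * |log v| ^ β * laplaceAbsR α v := by
  rw [laplaceAbsR, ← integral_const_mul]
  refine setIntegral_congr_fun measurableSet_Ioi fun u _ => ?_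
  simp only [integrand, norm_mul, norm_pow, norm_of_nonneg hv.le, one_div, log_inv, norm_neg,
    norm_of_nonneg (exp_pos _).le, Real.norm_eq_abs, abs_abs]
  ring

lemma integrableOn_integrand_prod (α β : ℕ) {s : Set ℝ} {g : ℝ → ℝ} (hs : MeasurableSet s)
    (hs0 : s ⊆ Ioi 0) (hg : IntegrableOn g s)
    (hbound : ∀ v ∈ s, v ^ (2 * α + 1) * |log v| ^ β * laplaceAbsR α v ≤ g v) :
    IntegrableOn (integrand α β) (s ×ˢ Ioi 0) :=
  integrableOn_prod_of_integral_norm_le hs (measurable_integrand α β).aestronglyMeasurable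
    (fun _ hv => integrableOn_integrand_slice α β (hs0 hv)) hg
    fun v hv => (integral_norm_integrand_slice α β (hs0 hv)).trans_le (hbound v hv)

theorem integrable_double (α β : ℕ) :
    IntegrableOn
      (fun vu : ℝ × ℝ =>
        vu.1 ^ (2 * α + 1) * Real.log (1 / vu.1) ^ β * Real.exp (-vu.2 * vu.1) * |R α (vu.2 ^ 2)|)
      (Ioi (0 : ℝ) ×ˢ Ioi (0 : ℝ)) := by
  -- split only the `v`-factor as `(0, 1] ∪ (1, ∞)`
  rw [← Ioc_union_Ioi_eq_Ioi zero_le_one, union_prod, Ioc_union_Ioi_eq_Ioi zero_le_one]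
  refine .union (integrableOn_integrand_prod α β measurableSet_Ioc Ioc_subset_Ioi_self ?_
      fun _ hv => pow_mul_abs_log_pow_mul_laplaceAbsR_le_of_le_one α β hv.1 hv.2)
    (integrableOn_integrand_prod α β measurableSet_Ioi (Ioi_subset_Ioi zero_le_one) ?_
      fun _ hv => pow_mul_abs_log_pow_mul_laplaceAbsR_le_of_one_le α β hv.le)
  · exact ((intervalIntegrable_iff_integrableOn_Ioc_of_le zero_le_one).1
      (intervalIntegral.intervalIntegrable_rpow' (by norm_num))).const_mul _
  · exact (integrableOn_Ioi_rpow_of_lt (by norm_num) one_pos).const_mul _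
end
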